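/- arXiv:2308.12161 — 2 statements merged into one kernel-verified Lean document; each statement's English description precedes it below -/
import Mathlib

section
/- Let f : ℝⁿ → ℝ be differentiable and convex, g : ℝⁿ → ℝᵏ have differentiable convex components, and h(x) = Cx − d be affine. Suppose x* ∈ ℝⁿ, λ* ∈ ℝᵏ with λ* ≥ 0, and μ* ∈ ℝᵐ satisfy the KKT conditions: ∇f(x*) + Σ_j λ*_j ∇g_j(x*) + Cᵀμ* = 0, g(x*) ≤ 0, Cx* = d, and λ*_j g_j(x*) = 0 for all j. If the scalar penalty parameter c satisfies c ≥ max(‖λ*‖_∞, ‖μ*‖_∞), then x* is a global minimizer over ℝⁿ of the ℓ₁-exact-penalty function φ(x) = f(x) + c·( Σ_{j=1}^{k} max{0, g_j(x)} + Σ_{l=1}^{m} |(Cx − d)_l| ). -/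
/-!
By convexity, `f` and each `g j` lie above their tangent planes at `xs`; weighting these by `1`
and `lam j` and adding `∑ mu l * (C x - d)_l`, stationarity cancels all derivative terms, so the
Lagrangian is at least `f xs` everywhere. Since `0 ≤ lam j ≤ c` and `|mu l| ≤ c`, the Lagrangian
is below the penalty function, whose value at the feasible point `xs` is `f xs`.
-/

open Finset

theorem ConvexOn.add_fderiv_sub_le {E : Type*} [NormedAddCommGroup E] [NormedSpace ℝ E]
    {s : Set E} {f : E → ℝ} {x y : E} (hfc : ConvexOn ℝ s f) (hx : x ∈ s) (hy : y ∈ s)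
    (hf : DifferentiableAt ℝ f x) : f x + fderiv ℝ f x (y - x) ≤ f y := by
  set line : ℝ →ᵃ[ℝ] E := AffineMap.lineMap x y
  have hderiv : HasDerivAt (f ∘ line) (fderiv ℝ f x (y - x)) 0 := by
    have hf' : HasFDerivAt f (fderiv ℝ f x) (line 0) := by simpa [line] using hf.hasFDerivAt
    exact hf'.comp_hasDerivAt 0 AffineMap.hasDerivAt_lineMap
  have hslope := (hfc.comp_affineMap line).le_slope_of_hasDerivAt (by simpa [line] using hx)
    (by simpa [line] using hy) one_pos hderiv
  simp only [slope_def_field, Function.comp_apply, line, AffineMap.lineMap_apply_zero,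
    AffineMap.lineMap_apply_one, sub_zero, div_one] at hslope
  linarith

theorem Finset.sum_mul_le_mul_sum_max_zero {ι : Type*} (s : Finset ι) {a t : ι → ℝ} {c : ℝ}
    (ha : ∀ i ∈ s, 0 ≤ a i) (hac : ∀ i ∈ s, a i ≤ c) :
    ∑ i ∈ s, a i * t i ≤ c * ∑ i ∈ s, max 0 (t i) := by
  rw [mul_sum]
  refine sum_le_sum fun i hi => ?_
  calc a i * t i ≤ a i * max 0 (t i) := mul_le_mul_of_nonneg_left (le_max_right _ _) (ha i hi)
    _ ≤ c * max 0 (t i) := mul_le_mul_of_nonneg_right (hac i hi) (le_max_left _ _)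

theorem Finset.sum_mul_le_mul_sum_abs {ι : Type*} (s : Finset ι) {a t : ι → ℝ} {c : ℝ}
    (hac : ∀ i ∈ s, |a i| ≤ c) : ∑ i ∈ s, a i * t i ≤ c * ∑ i ∈ s, |t i| := by
  rw [mul_sum]
  refine sum_le_sum fun i hi => ?_
  calc a i * t i ≤ |a i| * |t i| := (le_abs_self _).trans (abs_mul _ _).le
    _ ≤ c * |t i| := mul_le_mul_of_nonneg_right (hac i hi) (abs_nonneg _)

theorem le_lagrangian_of_kkt {n k m : ℕ} {f : (Fin n → ℝ) → ℝ} {g : Fin k → (Fin n → ℝ) → ℝ}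
    {C : Matrix (Fin m) (Fin n) ℝ} {d : Fin m → ℝ} {xs : Fin n → ℝ} {lam : Fin k → ℝ}
    {mu : Fin m → ℝ}
    (hf : DifferentiableAt ℝ f xs) (hfc : ConvexOn ℝ Set.univ f)
    (hg : ∀ j, DifferentiableAt ℝ (g j) xs) (hgc : ∀ j, ConvexOn ℝ Set.univ (g j))
    (hlam : ∀ j, 0 ≤ lam j)
    (hstat : ∀ v, fderiv ℝ f xs v + ∑ j, lam j * fderiv ℝ (g j) xs v
      + ∑ l, mu l * C.mulVec v l = 0)
    (hhx : C.mulVec xs = d) (hcs : ∀ j, lam j * g j xs = 0) (x : Fin n → ℝ) :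
    f xs ≤ f x + ∑ j, lam j * g j x + ∑ l, mu l * (C.mulVec x l - d l) := by
  have hf_tangent := hfc.add_fderiv_sub_le (Set.mem_univ xs) (Set.mem_univ x) hf
  have hg_tangent : ∀ j, lam j * fderiv ℝ (g j) xs (x - xs) ≤ lam j * g j x := fun j => by
    have := mul_le_mul_of_nonneg_left
      ((hgc j).add_fderiv_sub_le (Set.mem_univ xs) (Set.mem_univ x) (hg j)) (hlam j)
    linarith [mul_add (lam j) (g j xs) (fderiv ℝ (g j) xs (x - xs)), hcs j]
  have hC : ∀ l, C.mulVec (x - xs) l = C.mulVec x l - d l := fun l => by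
    rw [Matrix.mulVec_sub, hhx, Pi.sub_apply]
  have hstat_x := hstat (x - xs)
  simp only [hC] at hstat_x
  linarith [sum_le_sum fun j (_ : j ∈ univ) => hg_tangent j]

/-- Exact ℓ₁ penalty in the convex case: if `(xs, lam, mu)` satisfies the KKT conditions of the
convex problem `min f(x) s.t. g(x) ≤ 0, C x = d` and the penalty parameter `c` dominates the
∞-norms of the multipliers, then `xs` globally minimizes the ℓ₁-exact-penalty function
`φ(x) = f(x) + c (Σ_j max{0, g_j(x)} + Σ_l |(C x − d)_l|)`. -/
theorem exact_l1_penalty_of_kkt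
    (n k m : ℕ)
    (f : (Fin n → ℝ) → ℝ) (g : Fin k → (Fin n → ℝ) → ℝ)
    (C : Matrix (Fin m) (Fin n) ℝ) (d : Fin m → ℝ)
    (hf : Differentiable ℝ f) (hfc : ConvexOn ℝ Set.univ f)
    (hg : ∀ j, Differentiable ℝ (g j)) (hgc : ∀ j, ConvexOn ℝ Set.univ (g j))
    (xs : Fin n → ℝ) (lam : Fin k → ℝ) (mu : Fin m → ℝ)
    (hlam : ∀ j, 0 ≤ lam j)
    (hstat : ∀ v, fderiv ℝ f xs v + ∑ j, lam j * fderiv ℝ (g j) xs v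
      + ∑ l, mu l * C.mulVec v l = 0)
    (hgx : ∀ j, g j xs ≤ 0) (hhx : C.mulVec xs = d)
    (hcs : ∀ j, lam j * g j xs = 0)
    (c : ℝ) (hc : max ‖lam‖ ‖mu‖ ≤ c) :
    ∀ x, f xs + c * ((∑ j, max 0 (g j xs)) + ∑ l, |C.mulVec xs l - d l|) ≤
      f x + c * ((∑ j, max 0 (g j x)) + ∑ l, |C.mulVec x l - d l|) := by
  intro x
  have hlam_le : ∀ j ∈ univ, lam j ≤ c := fun j _ =>
    (le_abs_self _).trans ((norm_le_pi_norm lam j).trans ((le_max_left _ _).trans hc))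
  have hmu_le : ∀ l ∈ univ, |mu l| ≤ c := fun l _ =>
    (norm_le_pi_norm mu l).trans ((le_max_right _ _).trans hc)
  have hpenalty_xs : (∑ j, max 0 (g j xs)) + ∑ l, |C.mulVec xs l - d l| = 0 := by
    simp [hgx, hhx]
  have hlag := le_lagrangian_of_kkt (hf xs) hfc (fun j => hg j xs) hgc hlam hstat hhx hcs x
  have hg_penalty := sum_mul_le_mul_sum_max_zero univ (fun j _ => hlam j) hlam_le (t := fun j => g j x)
  have hh_penalty := sum_mul_le_mul_sum_abs univ hmu_le (t := fun l => C.mulVec x l - d l)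
  rw [hpenalty_xs, mul_add]
  linarith
end

section
/- Fix N data points (x*_i, ū_i) ∈ ℝⁿ × ℝᵖ, i = 1,…,N, positive penalty weights c₁, c₂, c₃, matrices Q ∈ ℝⁿˣⁿ and R ∈ ℝⁿˣᵖ, and affine parameterizations ω ↦ A(ω) ∈ ℝᵏˣⁿ and ω ↦ b(ω, u) ∈ ℝᵏ (affine in ω for each fixed u). Define Φ(θ, ω, x̂, λ) = Σ_{i=1}^{N} [ ‖x*_i − x̂_i‖₂² + c₁ ‖Q x̂_i + R ū_i + θ + A(ω)ᵀ λ_i‖₁ + c₂ Σ_{j=1}^{k} max{0, (A(ω) x̂_i − b(ω, ū_i))_j} + c₃ |λ_iᵀ (A(ω) x̂_i − b(ω, ū_i))| ], where x̂ = (x̂_1,…,x̂_N) ∈ (ℝⁿ)ᴺ, λ = (λ_1,…,λ_N) ∈ (ℝᵏ)ᴺ, θ ∈ ℝⁿ, and ω ranges over a convex set Ω. Then Φ is multiconvex with respect to the block partition {(θ, ω), x̂, λ}: Φ is convex in (θ, ω) for each fixed (x̂, λ), convex in x̂ for each fixed (θ, ω, λ), and convex in λ for each fixed (θ, ω, x̂).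 -/
open Matrix Set

/-!
Each summand of `Φ` is a nonnegative combination of the convex functions `t ↦ t²`, `t ↦ |t|`
and `t ↦ max 0 t` applied to coordinates of four residuals: `x*ᵢ - x̂ᵢ`, the stationarity
residual `Q x̂ᵢ + R ūᵢ + θ + A(ω)ᵀ λᵢ`, the constraint residual `A(ω) x̂ᵢ - b(ω, ūᵢ)` and the
complementarity residual `λᵢᵀ (A(ω) x̂ᵢ - b(ω, ūᵢ))`. Since `A` and `b` are affine in `ω` and the
only products between blocks are the bilinear ones `A(ω) x̂ᵢ` and `λᵢᵀ A(ω)`, every residual is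
affine in each block once the other two are fixed, and a convex function of an affine map is
convex.
-/

theorem convexOn_finset_sum {𝕜 E β ι : Type*} [Semiring 𝕜] [PartialOrder 𝕜] [AddCommMonoid E]
    [SMul 𝕜 E] [AddCommMonoid β] [PartialOrder β] [IsOrderedAddMonoid β] [Module 𝕜 β]
    {s : Set E} (hs : Convex 𝕜 s) (t : Finset ι) {f : ι → E → β}
    (hf : ∀ i ∈ t, ConvexOn 𝕜 s (f i)) : ConvexOn 𝕜 s fun x => ∑ i ∈ t, f i x := by
  classical
  induction t using Finset.induction_on with
  | empty => simpa using convexOn_const (0 : β) hs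
  | insert i t hi ih =>
    simp only [Finset.sum_insert hi]
    exact (hf i (t.mem_insert_self i)).add (ih fun j hj => hf j (t.mem_insert_of_mem hj))

theorem convexOn_abs : ConvexOn ℝ univ fun x : ℝ => |x| :=
  convexOn_univ_norm

theorem convexOn_max_zero : ConvexOn ℝ univ fun x : ℝ => max 0 x :=
  (convexOn_const 0 convex_univ).sup (convexOn_id convex_univ)

section PreservesAffineCombo

variable {E F G : Type*} [AddCommGroup E] [Module ℝ E] [AddCommGroup F] [Module ℝ F]
  [AddCommGroup G] [Module ℝ G]

def PreservesAffineCombo (f : E → F) : Prop :=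
  ∀ (x y : E) (a b : ℝ), a + b = 1 → f (a • x + b • y) = a • f x + b • f y

theorem preservesAffineCombo_const (c : F) : PreservesAffineCombo fun _ : E => c :=
  fun _ _ _ _ hab => (Convex.combo_self hab c).symm

theorem preservesAffineCombo_const_sub (c : E) : PreservesAffineCombo fun x : E => c - x := by
  intro x y a b hab
  obtain rfl : b = 1 - a := eq_sub_of_add_eq' hab
  module

theorem PreservesAffineCombo.comp_snd {f : E → F} (hf : PreservesAffineCombo f) :
    PreservesAffineCombo fun p : G × E => f p.2 :=
  fun x y a b hab => hf x.2 y.2 a b hab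

theorem PreservesAffineCombo.comp_eval {ι : Type*} {f : E → F} (hf : PreservesAffineCombo f)
    (i : ι) : PreservesAffineCombo fun x : ι → E => f (x i) :=
  fun x y a b hab => hf (x i) (y i) a b hab

theorem PreservesAffineCombo.apply {ι : Type*} {f : E → ι → ℝ} (hf : PreservesAffineCombo f)
    (j : ι) : PreservesAffineCombo fun x => f x j := by
  intro x y a b hab
  simp only [hf x y a b hab, Pi.add_apply, Pi.smul_apply]

theorem PreservesAffineCombo.const_dotProduct {ι : Type*} [Fintype ι] {f : E → ι → ℝ}
    (hf : PreservesAffineCombo f) (v : ι → ℝ) : PreservesAffineCombo fun x => v ⬝ᵥ f x := by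
  intro x y a b hab
  simp only [hf x y a b hab, dotProduct_add, dotProduct_smul]

theorem preservesAffineCombo_dotProduct_const {ι : Type*} [Fintype ι] (w : ι → ℝ) :
    PreservesAffineCombo fun v : ι → ℝ => v ⬝ᵥ w := by
  intro x y a b _
  simp only [add_dotProduct, smul_dotProduct]

theorem ConvexOn.comp_preservesAffineCombo {g : F → ℝ} (hg : ConvexOn ℝ univ g) {f : E → F}
    (hf : PreservesAffineCombo f) : ConvexOn ℝ univ fun x => g (f x) :=
  ⟨convex_univ, fun x _ y _ a b ha hb hab => by
    dsimp only
    rw [hf x y a b hab]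
    exact hg.2 (mem_univ _) (mem_univ _) ha hb hab⟩

theorem ConvexOn.sum_comp_preservesAffineCombo {ι : Type*} [Fintype ι] {g : ℝ → ℝ}
    (hg : ConvexOn ℝ univ g) {f : E → ι → ℝ} (hf : PreservesAffineCombo f) :
    ConvexOn ℝ univ fun x => ∑ j, g (f x j) :=
  convexOn_finset_sum convex_univ _ fun j _ => hg.comp_preservesAffineCombo (hf.apply j)

theorem convexOn_penalty_summand {ι κ : Type*} [Fintype ι] [Fintype κ] {c₁ c₂ c₃ : ℝ}
    (hc₁ : 0 ≤ c₁) (hc₂ : 0 ≤ c₂) (hc₃ : 0 ≤ c₃) {d r : E → ι → ℝ} {s : E → κ → ℝ} {t : E → ℝ}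
    (hd : PreservesAffineCombo d) (hr : PreservesAffineCombo r) (hs : PreservesAffineCombo s)
    (ht : PreservesAffineCombo t) :
    ConvexOn ℝ univ fun z =>
      (∑ j, d z j ^ 2) + c₁ * ∑ j, |r z j| + c₂ * ∑ j, max 0 (s z j) + c₃ * |t z| :=
  ((((Even.convexOn_pow even_two).sum_comp_preservesAffineCombo hd).add
    ((convexOn_abs.sum_comp_preservesAffineCombo hr).smul hc₁)).add
    ((convexOn_max_zero.sum_comp_preservesAffineCombo hs).smul hc₂)).add
    ((convexOn_abs.comp_preservesAffineCombo ht).smul hc₃)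

end PreservesAffineCombo

section Residuals

variable {m n p V : Type*} [Fintype n] [AddCommGroup V] [Module ℝ V]

def constraintResidual (M : Matrix m n ℝ) (c : m → ℝ) (x : n → ℝ) : m → ℝ :=
  M *ᵥ x - c

theorem preservesAffineCombo_constraintResidual_params (A : V →ᵃ[ℝ] Matrix m n ℝ)
    (c : V →ᵃ[ℝ] (m → ℝ)) (x : n → ℝ) :
    PreservesAffineCombo fun ω => constraintResidual (A ω) (c ω) x := by
  intro y z a b hab
  have hA := Convex.combo_affine_apply (f := A) (x := y) (y := z) hab
  have hc := Convex.combo_affine_apply (f := c) (x := y) (y := z) hab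
  simp only [constraintResidual, hA, hc, add_mulVec, smul_mulVec]
  module

theorem preservesAffineCombo_constraintResidual_primal (M : Matrix m n ℝ) (c : m → ℝ) :
    PreservesAffineCombo fun x => constraintResidual M c x := by
  intro y z a b hab
  obtain rfl : b = 1 - a := eq_sub_of_add_eq' hab
  simp only [constraintResidual, mulVec_add, mulVec_smul]
  module

variable [Fintype m] [Fintype p]

def stationarityResidual (Q : Matrix n n ℝ) (R : Matrix n p ℝ) (M : Matrix m n ℝ)
    (θ x : n → ℝ) (u : p → ℝ) (lam : m → ℝ) : n → ℝ :=
  Q *ᵥ x + R *ᵥ u + θ + Mᵀ *ᵥ lam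

theorem preservesAffineCombo_stationarityResidual_params (Q : Matrix n n ℝ) (R : Matrix n p ℝ)
    (A : V →ᵃ[ℝ] Matrix m n ℝ) (x : n → ℝ) (u : p → ℝ) (lam : m → ℝ) :
    PreservesAffineCombo fun θω : (n → ℝ) × V =>
      stationarityResidual Q R (A θω.2) θω.1 x u lam := by
  intro y z a b hab
  have hA := Convex.combo_affine_apply (f := A) (x := y.2) (y := z.2) hab
  obtain rfl : b = 1 - a := eq_sub_of_add_eq' hab
  simp only [stationarityResidual, Prod.fst_add, Prod.snd_add, Prod.smul_fst, Prod.smul_snd, hA,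
    transpose_add, transpose_smul, add_mulVec, smul_mulVec]
  module

theorem preservesAffineCombo_stationarityResidual_primal (Q : Matrix n n ℝ) (R : Matrix n p ℝ)
    (M : Matrix m n ℝ) (θ : n → ℝ) (u : p → ℝ) (lam : m → ℝ) :
    PreservesAffineCombo fun x => stationarityResidual Q R M θ x u lam := by
  intro y z a b hab
  obtain rfl : b = 1 - a := eq_sub_of_add_eq' hab
  simp only [stationarityResidual, mulVec_add, mulVec_smul]
  module

theorem preservesAffineCombo_stationarityResidual_dual (Q : Matrix n n ℝ) (R : Matrix n p ℝ)
    (M : Matrix m n ℝ) (θ x : n → ℝ) (u : p → ℝ) :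
    PreservesAffineCombo fun lam => stationarityResidual Q R M θ x u lam := by
  intro y z a b hab
  obtain rfl : b = 1 - a := eq_sub_of_add_eq' hab
  simp only [stationarityResidual, mulVec_add, mulVec_smul]
  module

end Residuals

/-- Multiconvexity of the exact-penalty objective `Φ` of the decision-focused learning problem
for a quadratic surrogate program with inequality constraints `A(ω) x ≤ b(ω, u)`, with respect
to the block partition `{(θ, ω), xh, λ}`: `Φ` is convex in `(θ, ω)` on `univ ×ˢ Ω` for each
fixed `(xh, λ)`, convex in `xh` for each fixed `(θ, ω, λ)`, and convex in `λ` for each fixed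
`(θ, ω, xh)`. -/
theorem penalty_objective_multiconvex
    (N n p k q : ℕ)
    (xs : Fin N → Fin n → ℝ) (u : Fin N → Fin p → ℝ)
    (c₁ c₂ c₃ : ℝ) (hc₁ : 0 < c₁) (hc₂ : 0 < c₂) (hc₃ : 0 < c₃)
    (Q : Matrix (Fin n) (Fin n) ℝ) (R : Matrix (Fin n) (Fin p) ℝ)
    (A : (Fin q → ℝ) →ᵃ[ℝ] Matrix (Fin k) (Fin n) ℝ)
    (b : (Fin p → ℝ) → (Fin q → ℝ) →ᵃ[ℝ] (Fin k → ℝ))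
    (Ω : Set (Fin q → ℝ)) (hΩ : Convex ℝ Ω)
    (Φ : (Fin n → ℝ) → (Fin q → ℝ) → (Fin N → Fin n → ℝ) → (Fin N → Fin k → ℝ) → ℝ)
    (hΦ : Φ = fun θ ω xh lam => ∑ i,
      ((∑ j, (xs i j - xh i j) ^ 2)
       + c₁ * ∑ j, |Q.mulVec (xh i) j + R.mulVec (u i) j + θ j + (A ω)ᵀ.mulVec (lam i) j|
       + c₂ * ∑ j, max 0 ((A ω).mulVec (xh i) j - b (u i) ω j)
       + c₃ * |∑ j, lam i j * ((A ω).mulVec (xh i) j - b (u i) ω j)|)) :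
    (∀ xh lam, ConvexOn ℝ (Set.univ ×ˢ Ω)
      (fun tw : (Fin n → ℝ) × (Fin q → ℝ) => Φ tw.1 tw.2 xh lam)) ∧
    (∀ θ, ∀ ω ∈ Ω, ∀ lam, ConvexOn ℝ Set.univ (fun xh => Φ θ ω xh lam)) ∧
    (∀ θ, ∀ ω ∈ Ω, ∀ xh, ConvexOn ℝ Set.univ (fun lam => Φ θ ω xh lam)) := by
  subst hΦ
  refine ⟨fun xh lam => ?_, fun θ ω _ lam => ?_, fun θ ω _ xh => ?_⟩
  · refine (convexOn_finset_sum convex_univ _ fun i _ => ?_).subset (subset_univ _)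
      (convex_univ.prod hΩ)
    have hs : PreservesAffineCombo fun θω : (Fin n → ℝ) × (Fin q → ℝ) =>
        constraintResidual (A θω.2) (b (u i) θω.2) (xh i) :=
      (preservesAffineCombo_constraintResidual_params A (b (u i)) (xh i)).comp_snd
    exact convexOn_penalty_summand hc₁.le hc₂.le hc₃.le (preservesAffineCombo_const _)
      (preservesAffineCombo_stationarityResidual_params Q R A (xh i) (u i) (lam i)) hs
      (hs.const_dotProduct (lam i))
  · refine convexOn_finset_sum convex_univ _ fun i _ => ?_
    have hs := (preservesAffineCombo_constraintResidual_primal (A ω) (b (u i) ω)).comp_eval i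
    exact convexOn_penalty_summand hc₁.le hc₂.le hc₃.le
      ((preservesAffineCombo_const_sub (xs i)).comp_eval i)
      ((preservesAffineCombo_stationarityResidual_primal Q R (A ω) θ (u i) (lam i)).comp_eval i)
      hs (hs.const_dotProduct (lam i))
  · refine convexOn_finset_sum convex_univ _ fun i _ => ?_
    have ht := preservesAffineCombo_dotProduct_const (constraintResidual (A ω) (b (u i) ω) (xh i))
    exact convexOn_penalty_summand hc₁.le hc₂.le hc₃.le (preservesAffineCombo_const _)
      ((preservesAffineCombo_stationarityResidual_dual Q R (A ω) θ (xh i) (u i)).comp_eval i)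
      (preservesAffineCombo_const _) (ht.comp_eval i)
end
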